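/- arXiv:2302.10826 — 2 statements merged into one kernel-verified Lean document; each statement's English description precedes it below -/
import Mathlib

section
/- The constraint matrix of the transportation problem is totally unimodular: for the matrix A with rows indexed by M ⊔ N and columns indexed by M × N, where A[(i), (i',j')] = 1 iff i = i' and A[(j), (i',j')] = 1 iff j = j' (and 0 otherwise), every square submatrix of A has determinant in {−1, 0, 1}. -/
lemma neg_one_pow_mul_mem_aux {d : ℝ} (hd : d ∈ ({-1, 0, 1} : Set ℝ)) (n : ℕ) :
    (-1 : ℝ) ^ n * d ∈ ({-1, 0, 1} : Set ℝ) := by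
  simp only [Set.mem_insert_iff, Set.mem_singleton_iff] at hd ⊢
  rcases neg_one_pow_eq_or ℝ n with h | h <;> rw [h] <;>
    rcases hd with rfl | rfl | rfl <;> norm_num

/-- The transportation constraint matrix is totally unimodular. -/
theorem transportation_matrix_totally_unimodular
    {M N : Type*} [Fintype M] [Fintype N] [DecidableEq M] [DecidableEq N]
    (A : Matrix (M ⊕ N) (M × N) ℝ)
    (hA : ∀ u p, A u p = if u = Sum.inl p.1 ∨ u = Sum.inr p.2 then 1 else 0)
    (k : ℕ) (r : Fin k → M ⊕ N) (s : Fin k → M × N)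
    (hr : Function.Injective r) (hs : Function.Injective s) :
    (A.submatrix r s).det ∈ ({-1, 0, 1} : Set ℝ) := by
  induction k with
  | zero =>
    simp [Matrix.det_fin_zero]
  | succ k ih =>
    by_cases hcol : ∀ x : Fin (k + 1),
        (∃ i, r i = Sum.inl (s x).1) ∧ (∃ i, r i = Sum.inr (s x).2)
    · -- every column has both a +1 in the M-block and a +1 in the N-block:
      -- rows are linearly dependent, so det = 0
      right; left
      rw [← Matrix.exists_vecMul_eq_zero_iff]
      refine ⟨fun i => if (r i).isLeft then 1 else -1, ?_, ?_⟩
      · intro h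
        have h0 := congrFun h 0
        by_cases hl : (r 0).isLeft <;> simp [hl] at h0
      · funext x
        obtain ⟨⟨i₁, h1⟩, ⟨i₂, h2⟩⟩ := hcol x
        have hne : i₁ ≠ i₂ := by
          intro h; rw [h, h2] at h1; simp at h1
        have key : ∀ i : Fin (k + 1),
            (if (r i).isLeft then (1 : ℝ) else -1) * A (r i) (s x)
              = (if i = i₁ then 1 else 0) + (if i = i₂ then -1 else 0) := by
          intro i
          by_cases hi1 : i = i₁
          · subst hi1
            rw [hA, h1]
            simp [hne]
          · by_cases hi2 : i = i₂
            · subst hi2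
              rw [hA, h2]
              simp [hi1]
            · have hz : A (r i) (s x) = 0 := by
                rw [hA]
                rw [if_neg]
                rintro (h | h)
                · exact hi1 (hr (h.trans h1.symm))
                · exact hi2 (hr (h.trans h2.symm))
              simp [hz, hi1, hi2]
        simp only [Matrix.vecMul, dotProduct, Matrix.submatrix_apply, Pi.zero_apply]
        rw [Finset.sum_congr rfl (fun i _ => key i)]
        rw [Finset.sum_add_distrib]
        simp
    · rw [not_forall] at hcol
      obtain ⟨x, hx⟩ := hcol
      rw [not_and_or] at hx
      push_neg at hx
      -- column x has at most one nonzero entry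
      by_cases hz : ∀ i, A (r i) (s x) = 0
      · right; left
        apply Matrix.det_eq_zero_of_column_eq_zero x
        intro i
        simpa using hz i
      · push_neg at hz
        obtain ⟨i₀, hi₀⟩ := hz
        have hzero : ∀ i, i ≠ i₀ → A (r i) (s x) = 0 := by
          intro i hii
          rw [hA]
          rw [if_neg]
          rw [hA] at hi₀
          by_contra hcond
          have hcond₀ : r i₀ = Sum.inl (s x).1 ∨ r i₀ = Sum.inr (s x).2 := by
            by_contra h; rw [if_neg h] at hi₀; exact hi₀ rfl
          rcases hx with hL | hR
          · rcases hcond with h | h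
            · exact hL i h
            · rcases hcond₀ with h0 | h0
              · exact hL i₀ h0
              · exact hii (hr (h.trans h0.symm))
          · rcases hcond with h | h
            · rcases hcond₀ with h0 | h0
              · exact hii (hr (h.trans h0.symm))
              · exact hR i₀ h0
            · exact hR i h
        have hone : A (r i₀) (s x) = 1 := by
          rw [hA] at hi₀ ⊢
          by_cases h : r i₀ = Sum.inl (s x).1 ∨ r i₀ = Sum.inr (s x).2
          · rw [if_pos h]
          · rw [if_neg h] at hi₀; exact absurd rfl hi₀
        rw [Matrix.det_succ_column _ x]
        rw [Fintype.sum_eq_single i₀ (fun i hii => by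
          simp [Matrix.submatrix_apply, hzero i hii])]
        simp only [Matrix.submatrix_apply, hone, mul_one]
        rw [Matrix.submatrix_submatrix]
        exact neg_one_pow_mul_mem_aux
          (ih (r ∘ i₀.succAbove) (s ∘ x.succAbove)
            (hr.comp (Fin.succAbove_right_injective))
            (hs.comp (Fin.succAbove_right_injective))) _
end

section
/- If all supplies a_i and demands b_j are integers, then every vertex (extreme point) of the transportation polytope {x ∈ ℝ^{M×N} : x ≥ 0, ∑_j x_{ij} = a_i, ∑_i x_{ij} = b_j} has all integer coordinates. -/
open Finset Module

/-- With integral supplies and demands, every vertex of the transportation polytope is integral. -/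
theorem transportation_polytope_vertex_integral
    {M N : Type*} [Fintype M] [Fintype N] [Nonempty M] [Nonempty N]
    (a : M → ℤ) (b : N → ℤ) (ha : ∀ i, 0 ≤ a i) (hb : ∀ j, 0 ≤ b j)
    (hbal : ∑ i, a i = ∑ j, b j)
    (P : Set (M × N → ℝ))
    (hP : P = {x | (∀ p, 0 ≤ x p) ∧ (∀ i, ∑ j, x (i, j) = (a i : ℝ)) ∧
        (∀ j, ∑ i, x (i, j) = (b j : ℝ))})
    (x : M × N → ℝ) (hx : x ∈ P)
    (hvertex : ¬ ∃ y ∈ P, ∃ z ∈ P, y ≠ z ∧ x = fun p => (y p + z p) / 2) :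
    ∀ p, ∃ m : ℤ, x p = (m : ℝ) := by
  classical
  by_contra hcon
  push_neg at hcon
  obtain ⟨p₀, hp₀⟩ := hcon
  rw [hP] at hx
  obtain ⟨hnn, hrow, hcol⟩ := hx
  set F : Finset (M × N) := Finset.univ.filter (fun p => ∀ m : ℤ, x p ≠ (m : ℝ)) with hFdef
  have hp₀F : p₀ ∈ F := by simp [hFdef, hp₀]
  have hFne : F.Nonempty := ⟨p₀, hp₀F⟩
  have hmemF : ∀ p, p ∈ F ↔ ∀ m : ℤ, x p ≠ (m : ℝ) := by
    intro p; simp [hFdef]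
  have hpos : ∀ p ∈ F, 0 < x p := by
    intro p hp
    refine lt_of_le_of_ne (hnn p) ?_
    intro h
    exact (hmemF p).mp hp 0 (by simpa using h.symm)
  set R : Finset M := F.image Prod.fst with hRdef
  set C : Finset N := F.image Prod.snd with hCdef
  -- Each row touched by F contains at least two fractional entries
  have hrow2 : ∀ i ∈ R, 2 ≤ (F.filter (fun p => p.1 = i)).card := by
    intro i hi
    obtain ⟨p, hpF, hpi⟩ := mem_image.mp hi
    by_contra h
    push_neg at h
    have hpmem : p ∈ F.filter (fun q => q.1 = i) := mem_filter.mpr ⟨hpF, hpi⟩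
    have huniq : ∀ q ∈ F.filter (fun q => q.1 = i), q = p := by
      intro q hq
      exact Finset.card_le_one.mp (by omega) q hq p hpmem
    have hint : ∀ j : N, ∃ m : ℤ, j ≠ p.2 → x (i, j) = (m : ℝ) := by
      intro j
      by_cases hj : j ≠ p.2
      · by_cases hF : (i, j) ∈ F
        · exfalso
          have : (i, j) = p := huniq _ (mem_filter.mpr ⟨hF, rfl⟩)
          exact hj (by rw [← this])
        · rw [hmemF] at hF
          push_neg at hF
          obtain ⟨m, hm⟩ := hF
          exact ⟨m, fun _ => hm⟩
      · exact ⟨0, fun h' => absurd h' hj⟩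
    choose g hg using hint
    have hsum : ∑ j ∈ Finset.univ.erase p.2, x (i, j)
        = ((∑ j ∈ Finset.univ.erase p.2, g j : ℤ) : ℝ) := by
      push_cast
      exact Finset.sum_congr rfl fun j hj => hg j (Finset.ne_of_mem_erase hj)
    have htot := hrow i
    rw [← Finset.add_sum_erase _ _ (Finset.mem_univ p.2)] at htot
    have hxp : x (i, p.2) = ((a i - ∑ j ∈ Finset.univ.erase p.2, g j : ℤ) : ℝ) := by
      push_cast
      push_cast at hsum
      linarith
    have : p = (i, p.2) := by rw [← hpi]
    exact (hmemF p).mp hpF _ (by rw [this, hxp])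
  have hcol2 : ∀ j ∈ C, 2 ≤ (F.filter (fun p => p.2 = j)).card := by
    intro j hj
    obtain ⟨p, hpF, hpj⟩ := mem_image.mp hj
    by_contra h
    push_neg at h
    have hpmem : p ∈ F.filter (fun q => q.2 = j) := mem_filter.mpr ⟨hpF, hpj⟩
    have huniq : ∀ q ∈ F.filter (fun q => q.2 = j), q = p := by
      intro q hq
      exact Finset.card_le_one.mp (by omega) q hq p hpmem
    have hint : ∀ i : M, ∃ m : ℤ, i ≠ p.1 → x (i, j) = (m : ℝ) := by
      intro i
      by_cases hi : i ≠ p.1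
      · by_cases hF : (i, j) ∈ F
        · exfalso
          have : (i, j) = p := huniq _ (mem_filter.mpr ⟨hF, rfl⟩)
          exact hi (by rw [← this])
        · rw [hmemF] at hF
          push_neg at hF
          obtain ⟨m, hm⟩ := hF
          exact ⟨m, fun _ => hm⟩
      · exact ⟨0, fun h' => absurd h' hi⟩
    choose g hg using hint
    have hsum : ∑ i ∈ Finset.univ.erase p.1, x (i, j)
        = ((∑ i ∈ Finset.univ.erase p.1, g i : ℤ) : ℝ) := by
      push_cast
      exact Finset.sum_congr rfl fun i hi => hg i (Finset.ne_of_mem_erase hi)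
    have htot := hcol j
    rw [← Finset.add_sum_erase _ _ (Finset.mem_univ p.1)] at htot
    have hxp : x (p.1, j) = ((b j - ∑ i ∈ Finset.univ.erase p.1, g i : ℤ) : ℝ) := by
      push_cast
      push_cast at hsum
      linarith
    have : p = (p.1, j) := by rw [← hpj]
    exact (hmemF p).mp hpF _ (by rw [this, hxp])
  -- cardinality bounds
  have hcardR : 2 * R.card ≤ F.card := by
    have h1 : F.card = ∑ i ∈ R, (F.filter (fun p => p.1 = i)).card :=
      Finset.card_eq_sum_card_fiberwise (fun p hp => Finset.mem_image_of_mem Prod.fst hp)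
    calc 2 * R.card = ∑ _i ∈ R, 2 := by rw [Finset.sum_const]; ring
    _ ≤ ∑ i ∈ R, (F.filter (fun p => p.1 = i)).card := Finset.sum_le_sum hrow2
    _ = F.card := h1.symm
  have hcardC : 2 * C.card ≤ F.card := by
    have h1 : F.card = ∑ j ∈ C, (F.filter (fun p => p.2 = j)).card :=
      Finset.card_eq_sum_card_fiberwise (fun p hp => Finset.mem_image_of_mem Prod.snd hp)
    calc 2 * C.card = ∑ _j ∈ C, 2 := by rw [Finset.sum_const]; ring
    _ ≤ ∑ j ∈ C, (F.filter (fun p => p.2 = j)).card := Finset.sum_le_sum hcol2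
    _ = F.card := h1.symm
  have hRne : R.Nonempty := ⟨p₀.1, Finset.mem_image_of_mem _ hp₀F⟩
  have hCne : C.Nonempty := ⟨p₀.2, Finset.mem_image_of_mem _ hp₀F⟩
  -- extension by zero, as a linear map
  let E : (↥F → ℝ) →ₗ[ℝ] (M × N → ℝ) :=
    { toFun := fun d p => if h : p ∈ F then d ⟨p, h⟩ else 0
      map_add' := by
        intro d₁ d₂; funext p; by_cases h : p ∈ F <;> simp [h]
      map_smul' := by
        intro c d; funext p; by_cases h : p ∈ F <;> simp [h] }
  have hE0 : ∀ d : ↥F → ℝ, ∀ p ∉ F, E d p = 0 := by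
    intro d p hp; simp only [E, LinearMap.coe_mk, AddHom.coe_mk]; rw [dif_neg hp]
  have hEval : ∀ d : ↥F → ℝ, ∀ q : ↥F, E d q = d q := by
    intro d q; simp only [E, LinearMap.coe_mk, AddHom.coe_mk]; rw [dif_pos q.2]
  -- row/column sum map
  let Φ : (↥F → ℝ) →ₗ[ℝ] ((↥R → ℝ) × (↥C → ℝ)) :=
    { toFun := fun d => (fun i => ∑ j, E d (i.1, j), fun j => ∑ i, E d (i, j.1))
      map_add' := by
        intro d₁ d₂
        refine Prod.ext (funext fun i => ?_) (funext fun j => ?_) <;>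
          simp [Finset.sum_add_distrib]
      map_smul' := by
        intro c d
        refine Prod.ext (funext fun i => ?_) (funext fun j => ?_) <;>
          simp [Finset.mul_sum] }
  let L : ((↥R → ℝ) × (↥C → ℝ)) →ₗ[ℝ] ℝ :=
    { toFun := fun uv => (∑ i, uv.1 i) - (∑ j, uv.2 j)
      map_add' := by
        intro u v; simp [Finset.sum_add_distrib]; ring
      map_smul' := by
        intro c u; simp [Finset.mul_sum, mul_sub] }
  -- total sums via rows / columns
  have hrowtot : ∀ d : ↥F → ℝ, ∑ i : ↥R, ∑ j, E d (i.1, j) = ∑ p, E d p := by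
    intro d
    have h1 : ∑ i : ↥R, ∑ j, E d (i.1, j) = ∑ i ∈ R, ∑ j, E d (i, j) :=
      Finset.sum_coe_sort R (fun i => ∑ j, E d (i, j))
    rw [h1, Finset.sum_subset (Finset.subset_univ R), ← Fintype.sum_prod_type]
    intro i _ hi
    apply Finset.sum_eq_zero
    intro j _
    apply hE0
    intro hmem
    exact hi (Finset.mem_image_of_mem Prod.fst hmem)
  have hcoltot : ∀ d : ↥F → ℝ, ∑ j : ↥C, ∑ i, E d (i, j.1) = ∑ p, E d p := by
    intro d
    have h1 : ∑ j : ↥C, ∑ i, E d (i, j.1) = ∑ j ∈ C, ∑ i, E d (i, j) :=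
      Finset.sum_coe_sort C (fun j => ∑ i, E d (i, j))
    rw [h1, Finset.sum_subset (Finset.subset_univ C), ← Fintype.sum_prod_type_right]
    intro j _ hj
    apply Finset.sum_eq_zero
    intro i _
    apply hE0
    intro hmem
    exact hj (Finset.mem_image_of_mem Prod.snd hmem)
  have hΦL : ∀ d : ↥F → ℝ, Φ d ∈ LinearMap.ker L := by
    intro d
    simp only [LinearMap.mem_ker, L, Φ, LinearMap.coe_mk, AddHom.coe_mk]
    show (∑ i : ↥R, ∑ j, E d (i.1, j)) - (∑ j : ↥C, ∑ i, E d (i, j.1)) = 0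
    rw [hrowtot d, hcoltot d, sub_self]
  -- L is surjective
  have hLsurj : Function.Surjective L := by
    intro r
    refine ⟨(fun _ => r / R.card, 0), ?_⟩
    have hc : (0 : ℝ) < (R.card : ℝ) := by
      exact_mod_cast Finset.card_pos.mpr hRne
    show (∑ _i : ↥R, r / (R.card : ℝ)) - ∑ j : ↥C, (0 : ↥C → ℝ) j = r
    simp only [L, LinearMap.coe_mk, AddHom.coe_mk, Pi.zero_apply,
      Finset.sum_const_zero, sub_zero, Finset.sum_const, Finset.card_univ,
      Fintype.card_coe, nsmul_eq_mul]
    field_simp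
  have hkerL : finrank ℝ (LinearMap.ker L) + 1 = R.card + C.card := by
    have h := LinearMap.finrank_range_add_finrank_ker L
    rw [LinearMap.range_eq_top.mpr hLsurj] at h
    have h2 : finrank ℝ ((↥R → ℝ) × (↥C → ℝ)) = R.card + C.card := by
      rw [Module.finrank_prod, Module.finrank_pi, Module.finrank_pi,
        Fintype.card_coe, Fintype.card_coe]
    simp only [finrank_top, Module.finrank_self] at h
    omega
  -- Φ restricted to ker L is not injective
  let Φ' := Φ.codRestrict (LinearMap.ker L) hΦL
  have hnotinj : ¬ Function.Injective Φ' := by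
    intro hinj
    have hle := LinearMap.finrank_le_finrank_of_injective hinj
    rw [Module.finrank_pi, Fintype.card_coe] at hle
    have hR1 : 1 ≤ R.card := Finset.card_pos.mpr hRne
    have hC1 : 1 ≤ C.card := Finset.card_pos.mpr hCne
    omega
  have : ∃ d : ↥F → ℝ, d ≠ 0 ∧ Φ d = 0 := by
    rw [Function.not_injective_iff] at hnotinj
    obtain ⟨d₁, d₂, heq, hne⟩ := hnotinj
    refine ⟨d₁ - d₂, sub_ne_zero.mpr hne, ?_⟩
    have : Φ d₁ = Φ d₂ := congrArg Subtype.val heq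
    rw [map_sub, this, sub_self]
  obtain ⟨d, hdne, hΦd⟩ := this
  set w : M × N → ℝ := E d with hwdef
  have hw0 : ∀ p ∉ F, w p = 0 := hE0 d
  have hwrow : ∀ i, ∑ j, w (i, j) = 0 := by
    intro i
    by_cases hi : i ∈ R
    · have := congrFun (congrArg Prod.fst hΦd) ⟨i, hi⟩
      simpa [Φ] using this
    · apply Finset.sum_eq_zero
      intro j _
      apply hw0
      intro hmem
      exact hi (Finset.mem_image_of_mem Prod.fst hmem)
  have hwcol : ∀ j, ∑ i, w (i, j) = 0 := by
    intro j
    by_cases hj : j ∈ C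
    · have := congrFun (congrArg Prod.snd hΦd) ⟨j, hj⟩
      simpa [Φ] using this
    · apply Finset.sum_eq_zero
      intro i _
      apply hw0
      intro hmem
      exact hj (Finset.mem_image_of_mem Prod.snd hmem)
  obtain ⟨q, hq⟩ := Function.ne_iff.mp hdne
  have hwq : w q ≠ 0 := by
    rw [hwdef, hEval d q]
    simpa using hq
  -- choose ε
  set ε : ℝ := (F.image fun p => x p / (|w p| + 1)).min' (hFne.image _) with hεdef
  have hε0 : 0 < ε := by
    rw [hεdef]
    rw [Finset.lt_min'_iff]
    intro y hy
    obtain ⟨p, hp, rfl⟩ := Finset.mem_image.mp hy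
    exact div_pos (hpos p hp) (by positivity)
  have hεle : ∀ p ∈ F, ε * |w p| ≤ x p := by
    intro p hp
    have h1 : ε ≤ x p / (|w p| + 1) :=
      Finset.min'_le _ _ (Finset.mem_image_of_mem _ hp)
    have h2 : (0 : ℝ) < |w p| + 1 := by positivity
    have h3 : ε * (|w p| + 1) ≤ x p := (le_div_iff₀ h2).mp h1
    nlinarith [abs_nonneg (w p)]
  -- the perturbations
  set y : M × N → ℝ := fun p => x p + ε * w p with hydef
  set z : M × N → ℝ := fun p => x p - ε * w p with hzdef
  have hyP : y ∈ P := by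
    rw [hP]
    refine ⟨?_, ?_, ?_⟩
    · intro p
      by_cases hp : p ∈ F
      · have := hεle p hp
        have := neg_abs_le (w p)
        simp only [hydef]
        nlinarith
      · simp [hydef, hw0 p hp, hnn p]
    · intro i
      simp only [hydef]
      rw [Finset.sum_add_distrib, ← Finset.mul_sum, hwrow, hrow]
      ring
    · intro j
      simp only [hydef]
      rw [Finset.sum_add_distrib, ← Finset.mul_sum, hwcol, hcol]
      ring
  have hzP : z ∈ P := by
    rw [hP]
    refine ⟨?_, ?_, ?_⟩
    · intro p
      by_cases hp : p ∈ F
      · have := hεle p hp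
        have := le_abs_self (w p)
        simp only [hzdef]
        nlinarith
      · simp [hzdef, hw0 p hp, hnn p]
    · intro i
      simp only [hzdef]
      rw [Finset.sum_sub_distrib, ← Finset.mul_sum, hwrow, hrow]
      ring
    · intro j
      simp only [hzdef]
      rw [Finset.sum_sub_distrib, ← Finset.mul_sum, hwcol, hcol]
      ring
  have hyz : y ≠ z := by
    intro h
    have := congrFun h (q : M × N)
    simp only [hydef, hzdef] at this
    have : ε * w q = 0 := by linarith
    rcases mul_eq_zero.mp this with h' | h'
    · exact absurd h' (ne_of_gt hε0)
    · exact hwq h'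
  exact hvertex ⟨y, hyP, z, hzP, hyz, funext fun p => by simp only [hydef, hzdef]; ring⟩
end
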